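/- Let Γ be a finite graph and Δ ⊆ Γ a full subgraph such that for every vertex v ∈ Γ ∖ Δ the subgraph Δ ∖ st_Γ(v) is connected. Then the special subgroup A_Δ is preserved (up to conjugacy) by every partial conjugation of A_Γ, hence by the entire group PAut(A_Γ) of pure symmetric automorphisms. -/

import Mathlib

/-!
A partial conjugation `g` by `v` on `K` fixes `A_Δ` pointwise when `K` misses `Δ`, and maps
`A_Δ` onto itself when `v ∈ Δ`. Otherwise `Δ ∖ st(v)` is connected and avoids `st(v)`, so once
it meets the union of components `K` it lies inside `K`; then `g` followed by conjugation by `v`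
fixes every generator of `A_Δ`, since the generators in `st(v)` commute with `v`.
The automorphisms preserving `A_Δ` up to conjugacy form the subgroup `Inn(A_Γ) ⊔ Stab(A_Δ)`,
so it contains `PAut(A_Γ)` as soon as it contains the generating partial conjugations.
-/

/-- The defining relators of the right-angled Artin group of a graph. -/
def raagRels {V : Type*} (Γ : SimpleGraph V) : Set (FreeGroup V) :=
  {r | ∃ u v : V, Γ.Adj u v ∧
    r = FreeGroup.of u * FreeGroup.of v * (FreeGroup.of u)⁻¹ * (FreeGroup.of v)⁻¹}

/-- The right-angled Artin group on a graph `Γ`. -/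
abbrev RAAG {V : Type*} (Γ : SimpleGraph V) : Type _ := PresentedGroup (raagRels Γ)

/-- The standard generator of `RAAG Γ` corresponding to a vertex. -/
def raagGen {V : Type*} (Γ : SimpleGraph V) (v : V) : RAAG Γ := PresentedGroup.of v

/-- The star of a vertex: the vertex together with its neighbours. -/
def graphStar {V : Type*} (Γ : SimpleGraph V) (v : V) : Set V :=
  insert v (Γ.neighborSet v)

/-- The connected component (as a set of vertices of `V`) of the vertex `u` in the induced
subgraph of `Γ` on the set `s`. -/
def compIn {V : Type*} (Γ : SimpleGraph V) (s : Set V) (u : V) : Set V :=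
  {x | ∃ (hu : u ∈ s) (hx : x ∈ s), (Γ.induce s).Reachable ⟨u, hu⟩ ⟨x, hx⟩}

/-- `A` is a union of connected components of `Γ ∖ st(v)`. -/
def IsUnionOfComponents {V : Type*} (Γ : SimpleGraph V) (v : V) (A : Set V) : Prop :=
  A ⊆ (graphStar Γ v)ᶜ ∧ ∀ u ∈ A, compIn Γ (graphStar Γ v)ᶜ u ⊆ A

open Classical in
/-- `φ` is the partial conjugation by the vertex `v` based at the set `A`: it sends each
standard generator `u ∈ A` to `v⁻¹ u v` and fixes all other standard generators. -/
noncomputable def IsPartialConj {V : Type*} (Γ : SimpleGraph V)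
    (φ : MulAut (RAAG Γ)) (v : V) (A : Set V) : Prop :=
  ∀ u : V, φ (raagGen Γ u) =
    if u ∈ A then (raagGen Γ v)⁻¹ * raagGen Γ u * raagGen Γ v else raagGen Γ u

/-- The special subgroup of the RAAG generated by the vertices of `Δ`. -/
def specialSubgroup {V : Type*} (Γ : SimpleGraph V) (Δ : Set V) : Subgroup (RAAG Γ) :=
  Subgroup.closure (raagGen Γ '' Δ)

/-- `φ` preserves the subgroup `S` up to conjugacy: some representative of the outer
class of `φ` maps `S` onto `S`. -/
def PreservesSubgroup {V : Type*} (Γ : SimpleGraph V) (φ : MulAut (RAAG Γ))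
    (S : Subgroup (RAAG Γ)) : Prop :=
  ∃ x : RAAG Γ, S.map ((MulAut.conj x * φ : MulAut (RAAG Γ)) : RAAG Γ →* RAAG Γ) = S

/-- `φ` acts trivially on the subgroup `S`: some representative of the outer class of `φ`
restricts to the identity on `S`. -/
def ActsTriviallyOn {V : Type*} (Γ : SimpleGraph V) (φ : MulAut (RAAG Γ))
    (S : Subgroup (RAAG Γ)) : Prop :=
  ∃ x : RAAG Γ, ∀ a ∈ S, x * φ a * x⁻¹ = a

/-- The subgroup of pure symmetric automorphisms: the subgroup of `Aut(A_Γ)` generated by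
all partial conjugations `c_L^v` with `L` a connected component of `Γ ∖ st(v)` (by a
theorem of Laurence these generate the group of all automorphisms sending each standard
generator to a conjugate of itself). -/
def PAutRaag {V : Type*} (Γ : SimpleGraph V) : Subgroup (MulAut (RAAG Γ)) :=
  Subgroup.closure {φ | ∃ (v : V) (u : V), u ∈ (graphStar Γ v)ᶜ ∧
    IsPartialConj Γ φ v (compIn Γ (graphStar Γ v)ᶜ u)}

section ConjugacyClassStabilizer

variable {G : Type*} [Group G]

open Pointwise

theorem MulAut.conj_range_normal : (MulAut.conj : G →* MulAut G).range.Normal :=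
  ⟨by rintro _ ⟨x, rfl⟩ ψ; exact ⟨ψ x, by ext; simp⟩⟩

/-- `Inn(G)` is normal, so `Inn(G) ⊔ Stab(S)` is the product set `Inn(G) * Stab(S)`. -/
theorem exists_map_conj_mul_eq_iff_mem_sup (φ : MulAut G) (S : Subgroup G) :
    (∃ x : G, S.map ((MulAut.conj x * φ : MulAut G) : G →* G) = S) ↔
      φ ∈ (MulAut.conj : G →* MulAut G).range ⊔ MulAction.stabilizer (MulAut G) S := by
  have := MulAut.conj_range_normal (G := G)
  rw [Subgroup.mem_sup_of_normal_left]
  constructor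
  · rintro ⟨x, hx⟩
    refine ⟨MulAut.conj x⁻¹, ⟨x⁻¹, rfl⟩, MulAut.conj x * φ, hx, ?_⟩
    rw [← mul_assoc, ← map_mul, inv_mul_cancel, map_one, one_mul]
  · rintro ⟨_, ⟨y, rfl⟩, z, hz, rfl⟩
    exact ⟨y⁻¹, by rw [← mul_assoc, ← map_mul, inv_mul_cancel, map_one, one_mul]; exact hz⟩

theorem Subgroup.map_closure_eq_self_of_forall_mem (f : G →* G) {T : Set G}
    (hmaps : ∀ t ∈ T, f t ∈ closure T) (hhits : ∀ t ∈ T, t ∈ (closure T).map f) :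
    (closure T).map f = closure T := by
  refine le_antisymm ?_ ((closure_le _).2 hhits)
  rw [MonoidHom.map_closure, closure_le]
  rintro _ ⟨t, ht, rfl⟩
  exact hmaps t ht

end ConjugacyClassStabilizer

section GraphComponents

variable {V : Type*} {Γ : SimpleGraph V}

theorem subset_of_preconnected_of_compIn_subset {s D A : Set V} (hDs : D ⊆ s)
    (hD : (Γ.induce D).Preconnected) (hA : ∀ u ∈ A, compIn Γ s u ⊆ A) {u : V} (huD : u ∈ D)
    (huA : u ∈ A) : D ⊆ A := fun w hwD =>
  hA u huA ⟨hDs huD, hDs hwD, (hD ⟨u, huD⟩ ⟨w, hwD⟩).map (Γ.induceHomOfLE hDs).toHom⟩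

theorem isUnionOfComponents_compIn (v u : V) :
    IsUnionOfComponents Γ v (compIn Γ (graphStar Γ v)ᶜ u) :=
  ⟨fun _ ⟨_, hx, _⟩ => hx, fun _ ⟨hu, _, huw⟩ _ ⟨_, hx, hwx⟩ => ⟨hu, hx, huw.trans hwx⟩⟩

theorem IsUnionOfComponents.notMem_self {v : V} {K : Set V} (hK : IsUnionOfComponents Γ v K) :
    v ∉ K :=
  fun hv => hK.1 hv (Set.mem_insert v _)

end GraphComponents

section RAAG

variable {V : Type*} {Γ : SimpleGraph V}

theorem raagGen_commute_of_adj {u v : V} (h : Γ.Adj u v) :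
    Commute (raagGen Γ u) (raagGen Γ v) := by
  have hrel : raagGen Γ u * raagGen Γ v * (raagGen Γ u)⁻¹ * (raagGen Γ v)⁻¹ = 1 :=
    PresentedGroup.one_of_mem ⟨u, v, h, rfl⟩
  rwa [mul_inv_eq_one, mul_inv_eq_iff_eq_mul] at hrel

theorem raagGen_commute_of_mem_graphStar {u v : V} (hu : u ∈ graphStar Γ v) :
    Commute (raagGen Γ u) (raagGen Γ v) := by
  rcases hu with rfl | hadj
  · exact Commute.refl _
  · exact raagGen_commute_of_adj hadj.symm

theorem actsTriviallyOn_specialSubgroup {φ : MulAut (RAAG Γ)} {Δ : Set V} (x : RAAG Γ)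
    (h : ∀ u ∈ Δ, x * φ (raagGen Γ u) * x⁻¹ = raagGen Γ u) :
    ActsTriviallyOn Γ φ (specialSubgroup Γ Δ) := by
  refine ⟨x, fun a ha => ?_⟩
  have hgen : Set.EqOn ((MulAut.conj x * φ : MulAut (RAAG Γ)) : RAAG Γ →* RAAG Γ)
      (MonoidHom.id _) (raagGen Γ '' Δ) := by
    rintro _ ⟨u, hu, rfl⟩
    exact h u hu
  exact MonoidHom.eqOn_closure hgen ha

theorem ActsTriviallyOn.preservesSubgroup {φ : MulAut (RAAG Γ)} {S : Subgroup (RAAG Γ)}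
    (h : ActsTriviallyOn Γ φ S) : PreservesSubgroup Γ φ S := by
  obtain ⟨x, hx⟩ := h
  refine ⟨x, le_antisymm ?_ fun a ha => ⟨a, ha, hx a ha⟩⟩
  rintro _ ⟨a, ha, rfl⟩
  simpa [hx a ha] using ha

end RAAG

section PartialConjugation

variable {V : Type*} {Γ : SimpleGraph V} {g : MulAut (RAAG Γ)} {v : V} {K Δ : Set V}

theorem IsPartialConj.apply_of_mem (hg : IsPartialConj Γ g v K) {u : V} (hu : u ∈ K) :
    g (raagGen Γ u) = (raagGen Γ v)⁻¹ * raagGen Γ u * raagGen Γ v := by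
  rw [hg u, if_pos hu]

theorem IsPartialConj.apply_of_notMem (hg : IsPartialConj Γ g v K) {u : V} (hu : u ∉ K) :
    g (raagGen Γ u) = raagGen Γ u := by
  rw [hg u, if_neg hu]

theorem IsPartialConj.map_specialSubgroup_of_mem (hg : IsPartialConj Γ g v K) (hvK : v ∉ K)
    (hvΔ : v ∈ Δ) : (specialSubgroup Γ Δ).map (g : RAAG Γ →* RAAG Γ) = specialSubgroup Γ Δ := by
  have hmem : ∀ u ∈ Δ, raagGen Γ u ∈ specialSubgroup Γ Δ :=
    fun u hu => Subgroup.subset_closure ⟨u, hu, rfl⟩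
  apply Subgroup.map_closure_eq_self_of_forall_mem
  · rintro _ ⟨u, hu, rfl⟩
    by_cases huK : u ∈ K
    · rw [MonoidHom.coe_coe, hg.apply_of_mem huK]
      exact mul_mem (mul_mem (inv_mem (hmem v hvΔ)) (hmem u hu)) (hmem v hvΔ)
    · rw [MonoidHom.coe_coe, hg.apply_of_notMem huK]
      exact hmem u hu
  · rintro _ ⟨u, hu, rfl⟩
    by_cases huK : u ∈ K
    · refine ⟨raagGen Γ v * raagGen Γ u * (raagGen Γ v)⁻¹,
        mul_mem (mul_mem (hmem v hvΔ) (hmem u hu)) (inv_mem (hmem v hvΔ)), ?_⟩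
      simp only [MonoidHom.coe_coe, map_mul, map_inv, hg.apply_of_mem huK,
        hg.apply_of_notMem hvK]
      group
    · exact ⟨raagGen Γ u, hmem u hu, hg.apply_of_notMem huK⟩

theorem IsPartialConj.actsTriviallyOn_of_disjoint (hg : IsPartialConj Γ g v K)
    (hΔK : Disjoint Δ K) : ActsTriviallyOn Γ g (specialSubgroup Γ Δ) :=
  actsTriviallyOn_specialSubgroup 1 fun u hu => by
    rw [hg.apply_of_notMem (Set.disjoint_left.1 hΔK hu), one_mul, inv_one, mul_one]

/-- Conjugating back by `v` undoes `g` on `K` and is harmless on the star of `v`. -/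
theorem IsPartialConj.actsTriviallyOn_of_subset_union (hg : IsPartialConj Γ g v K)
    (hΔ : Δ ⊆ K ∪ graphStar Γ v) : ActsTriviallyOn Γ g (specialSubgroup Γ Δ) :=
  actsTriviallyOn_specialSubgroup (raagGen Γ v) fun u hu => by
    rcases hΔ hu with huK | hstar
    · rw [hg.apply_of_mem huK]
      group
    · by_cases huK : u ∈ K
      · rw [hg.apply_of_mem huK]
        group
      · rw [hg.apply_of_notMem huK, (raagGen_commute_of_mem_graphStar hstar).symm.eq]
        group

theorem IsPartialConj.preservesSubgroup_specialSubgroup (hg : IsPartialConj Γ g v K)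
    (hK : IsUnionOfComponents Γ v K)
    (hconn : v ∉ Δ → (Γ.induce (Δ \ graphStar Γ v)).Preconnected) :
    PreservesSubgroup Γ g (specialSubgroup Γ Δ) := by
  by_cases hvΔ : v ∈ Δ
  · exact ⟨1, by rw [map_one, one_mul]; exact hg.map_specialSubgroup_of_mem hK.notMem_self hvΔ⟩
  by_cases hΔK : Disjoint Δ K
  · exact (hg.actsTriviallyOn_of_disjoint hΔK).preservesSubgroup
  obtain ⟨u, huΔ, huK⟩ := Set.not_disjoint_iff.1 hΔK
  have hsub : Δ \ graphStar Γ v ⊆ K :=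
    subset_of_preconnected_of_compIn_subset (Set.sdiff_subset_compl _ _) (hconn hvΔ) hK.2
      ⟨huΔ, hK.1 huK⟩ huK
  refine (hg.actsTriviallyOn_of_subset_union fun w hw => ?_).preservesSubgroup
  by_cases hw' : w ∈ graphStar Γ v
  · exact Or.inr hw'
  · exact Or.inl (hsub ⟨hw, hw'⟩)

end PartialConjugation

theorem special_preserved_of_connected_complements_general {V : Type*}
    (Γ : SimpleGraph V) (Δ : Set V)
    (hconn : ∀ v ∉ Δ, (Γ.induce (Δ \ graphStar Γ v)).Preconnected) :
    (∀ (v : V) (K : Set V) (g : MulAut (RAAG Γ)), IsUnionOfComponents Γ v K →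
        IsPartialConj Γ g v K → PreservesSubgroup Γ g (specialSubgroup Γ Δ)) ∧
    (∀ g ∈ PAutRaag Γ, PreservesSubgroup Γ g (specialSubgroup Γ Δ)) := by
  refine ⟨fun v _ _ hK hg => hg.preservesSubgroup_specialSubgroup hK (hconn v), fun g hg => ?_⟩
  refine (exists_map_conj_mul_eq_iff_mem_sup g _).2 ((Subgroup.closure_le _).2 ?_ hg)
  rintro φ ⟨v, u, -, hφ⟩
  exact (exists_map_conj_mul_eq_iff_mem_sup φ _).1
    (hφ.preservesSubgroup_specialSubgroup (isUnionOfComponents_compIn v u) (hconn v))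

theorem special_preserved_of_connected_complements {V : Type*} [Fintype V]
    (Γ : SimpleGraph V) (Δ : Set V)
    (hconn : ∀ v ∉ Δ, (Γ.induce (Δ \ graphStar Γ v)).Preconnected) :
    (∀ (v : V) (K : Set V) (g : MulAut (RAAG Γ)), IsUnionOfComponents Γ v K →
        IsPartialConj Γ g v K → PreservesSubgroup Γ g (specialSubgroup Γ Δ)) ∧
    (∀ g ∈ PAutRaag Γ, PreservesSubgroup Γ g (specialSubgroup Γ Δ)) :=
  special_preserved_of_connected_complements_general Γ Δ hconn
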